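/- arXiv:2111.15553 — 7 statements merged into one kernel-verified Lean document; each statement's English description precedes it below -/
import Mathlib

section
/- A semimetric space (X,d) admits a triangle function that is continuous at (0,0) if and only if lim_{r→0} sup_{p∈X} diam B(p,r) = 0, where B(p,r) = {x : d(x,p) < r} and diam of a set is the supremum of distances between its points. -/
/-!
If `Φ` is a regular triangle function, then for `x, y ∈ B(p, r)` we get
`d(x, y) ≤ Φ(d(x, p), d(p, y)) ≤ Φ(r, r)`, and `Φ(r, r) → Φ(0, 0) = 0`.
Conversely, the basic triangle function
`Φ₀(u, v) = sup {d(x, y) : d(p, x) ≤ u, d(p, y) ≤ v}` is bounded, for `u, v < r`, by the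
supremum of the diameters of the `r`-balls, so it tends to `0` at `(0, 0)`; in particular
`Φ₀(0, 0) = 0` and `Φ₀` is regular.
-/

open Set Filter Topology ENNReal

namespace Semimetric

variable {X : Type*}

/-- Ball of radius `r` centered at `p`. -/
def Ball (d : X → X → ℝ) (p : X) (r : ℝ) : Set X := {x | d x p < r}

/-- A set is open iff each of its points is interior. -/
def IsOpenS (d : X → X → ℝ) (U : Set X) : Prop := ∀ p ∈ U, ∃ r > (0:ℝ), Ball d p r ⊆ U

def IsClosedS (d : X → X → ℝ) (A : Set X) : Prop := IsOpenS d Aᶜ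

/-- Compactness in the ball-generated topology. -/
def IsCompactS (d : X → X → ℝ) (H : Set X) : Prop :=
  ∀ C : Set (Set X), (∀ U ∈ C, IsOpenS d U) → H ⊆ ⋃₀ C →
    ∃ F ⊆ C, F.Finite ∧ H ⊆ ⋃₀ F

/-- Total boundedness: finite ε-nets exist for every ε > 0. -/
def TotBddS (d : X → X → ℝ) (H : Set X) : Prop :=
  ∀ ε > (0:ℝ), ∃ P : Finset X, H ⊆ ⋃ p ∈ P, Ball d p ε

/-- Boundedness: finite diameter. -/
def BoundedS (d : X → X → ℝ) (A : Set X) : Prop := ∃ M : ℝ, ∀ x ∈ A, ∀ y ∈ A, d x y ≤ M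

def IsCauchyS (d : X → X → ℝ) (x : ℕ → X) : Prop :=
  ∀ ε > (0:ℝ), ∃ N, ∀ m ≥ N, ∀ n ≥ N, d (x m) (x n) < ε

def ConvTo (d : X → X → ℝ) (x : ℕ → X) (p : X) : Prop :=
  Tendsto (fun n => d (x n) p) atTop (nhds 0)

def IsCompleteS (d : X → X → ℝ) : Prop :=
  ∀ x : ℕ → X, IsCauchyS d x → ∃ p, ConvTo d x p

/-- Extended-real-valued triangle function for the semimetric `d`. -/
def IsTriangleFun (d : X → X → ℝ) (Φ : ℝ → ℝ → ℝ≥0∞) : Prop :=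
  (∀ u v, Φ u v = Φ v u) ∧
  (∀ u₁ u₂ v, 0 ≤ u₁ → u₁ ≤ u₂ → 0 ≤ v → Φ u₁ v ≤ Φ u₂ v) ∧
  Φ 0 0 = 0 ∧
  ∀ x y z : X, ENNReal.ofReal (d x y) ≤ Φ (d x z) (d z y)

/-- Regularity: continuity at (0,0) (within the nonnegative quadrant). -/
def RegularAt00 (Φ : ℝ → ℝ → ℝ≥0∞) : Prop :=
  ContinuousWithinAt (fun p : ℝ × ℝ => Φ p.1 p.2) (Set.Ici 0 ×ˢ Set.Ici 0) (0, 0)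

/-- Real-valued triangle function for the semimetric `d`. -/
def IsTriangleFunR (d : X → X → ℝ) (Φ : ℝ → ℝ → ℝ) : Prop :=
  (∀ u v, Φ u v = Φ v u) ∧
  (∀ u₁ u₂ v, 0 ≤ u₁ → u₁ ≤ u₂ → 0 ≤ v → Φ u₁ v ≤ Φ u₂ v) ∧
  (∀ u v, 0 ≤ u → 0 ≤ v → 0 ≤ Φ u v) ∧
  Φ 0 0 = 0 ∧
  ∀ x y z : X, d x y ≤ Φ (d x z) (d z y)

/-- The basic triangle function of `d`. -/
noncomputable def PhiBasic (d : X → X → ℝ) (u v : ℝ) : ℝ≥0∞ :=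
  sSup {e | ∃ x y p : X, d p x ≤ u ∧ d p y ≤ v ∧ e = ENNReal.ofReal (d x y)}

/-- The Hausdorff–Pompeiu distance of two sets. -/
noncomputable def HD (d : X → X → ℝ) (A B : Set X) : ℝ≥0∞ :=
  sInf {ε : ℝ≥0∞ | 0 < ε ∧ (∀ a ∈ A, ∃ b ∈ B, ENNReal.ofReal (d a b) < ε) ∧
    (∀ b ∈ B, ∃ a ∈ A, ENNReal.ofReal (d b a) < ε)}

/-- Comparison function: increasing on ℝ₊, nonnegative, iterates tend to 0. -/
def IsComparison (φ : ℝ → ℝ) : Prop :=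
  (∀ t, 0 ≤ t → 0 ≤ φ t) ∧
  (∀ s t, 0 ≤ s → s ≤ t → φ s ≤ φ t) ∧
  ∀ t > (0:ℝ), Tendsto (fun n => φ^[n] t) atTop (nhds 0)

/-- φ-contraction. -/
def IsContraction (d : X → X → ℝ) (φ : ℝ → ℝ) (T : X → X) : Prop :=
  ∀ x y, d (T x) (T y) ≤ φ (d x y)

/-- ψ(t) = sup { s ≥ 0 : s ≤ Φ(t, φ(s)) }. -/
noncomputable def Psi (Φ : ℝ → ℝ → ℝ≥0∞) (φ : ℝ → ℝ) (t : ℝ) : ℝ≥0∞ :=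
  sSup {e | ∃ s : ℝ, 0 ≤ s ∧ ENNReal.ofReal s ≤ Φ t (φ s) ∧ e = ENNReal.ofReal s}

end Semimetric

open Semimetric
/-- Extended diameter of a set. -/
noncomputable def EDiam {X : Type*} (d : X → X → ℝ) (S : Set X) : ℝ≥0∞ :=
  ⨆ x ∈ S, ⨆ y ∈ S, ENNReal.ofReal (d x y)

namespace Semimetric

variable {X : Type*} {d : X → X → ℝ}

noncomputable def supBallEDiam (d : X → X → ℝ) (r : ℝ) : ℝ≥0∞ :=
  ⨆ p : X, EDiam d (Ball d p r)

theorem ofReal_le_eDiam {S : Set X} {x y : X} (hx : x ∈ S) (hy : y ∈ S) :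
    ENNReal.ofReal (d x y) ≤ EDiam d S :=
  le_iSup₂_of_le x hx (le_iSup₂_of_le y hy le_rfl)

theorem mem_ball_of_le_of_lt (hsymm : ∀ x y, d x y = d y x) {p x : X} {u r : ℝ}
    (hu : d p x ≤ u) (hr : u < r) : x ∈ Ball d p r :=
  show d x p < r from hsymm x p ▸ hu.trans_lt hr

section TriangleFun

variable {Φ : ℝ → ℝ → ℝ≥0∞}

theorem IsTriangleFun.supBallEDiam_le (hΦ : IsTriangleFun d Φ) (hpos : ∀ x y, 0 ≤ d x y)
    (hsymm : ∀ x y, d x y = d y x) {r : ℝ} (hr : 0 ≤ r) :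
    supBallEDiam d r ≤ Φ r r := by
  obtain ⟨hcomm, hmono, -, htri⟩ := hΦ
  refine iSup_le fun p => iSup₂_le fun x (hx : d x p < r) => iSup₂_le fun y (hy : d y p < r) => ?_
  calc ENNReal.ofReal (d x y) ≤ Φ (d x p) (d p y) := htri x y p
    _ ≤ Φ r (d p y) := hmono _ _ _ (hpos x p) hx.le (hpos p y)
    _ = Φ (d p y) r := hcomm _ _
    _ ≤ Φ r r := hmono _ _ _ (hpos p y) (hsymm p y ▸ hy.le) hr

theorem RegularAt00.tendsto_diag (hΦ : RegularAt00 Φ) :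
    Tendsto (fun r => Φ r r) (𝓝[>] 0) (𝓝 (Φ 0 0)) := by
  have hdiag : Tendsto (fun r : ℝ => (r, r)) (𝓝[>] 0) (𝓝[Ici 0 ×ˢ Ici 0] (0, 0)) :=
    tendsto_nhdsWithin_iff.mpr
      ⟨((continuous_id.prodMk continuous_id).tendsto 0).mono_left nhdsWithin_le_nhds,
        eventually_nhdsWithin_of_forall fun r (hr : 0 < r) => ⟨hr.le, hr.le⟩⟩
  exact hΦ.tendsto.comp hdiag

theorem tendsto_supBallEDiam_of_regular (hpos : ∀ x y, 0 ≤ d x y)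
    (hsymm : ∀ x y, d x y = d y x) (hΦ : IsTriangleFun d Φ) (hreg : RegularAt00 Φ) :
    Tendsto (supBallEDiam d) (𝓝[>] 0) (𝓝 0) := by
  have hlim : Tendsto (fun r => Φ r r) (𝓝[>] 0) (𝓝 0) := hΦ.2.2.1 ▸ hreg.tendsto_diag
  exact tendsto_of_tendsto_of_tendsto_of_le_of_le' tendsto_const_nhds hlim
    (Eventually.of_forall fun _ => bot_le)
    (eventually_nhdsWithin_of_forall fun r (hr : 0 < r) => hΦ.supBallEDiam_le hpos hsymm hr.le)

end TriangleFun

section PhiBasic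

theorem phiBasic_comm (hsymm : ∀ x y, d x y = d y x) (u v : ℝ) :
    PhiBasic d u v = PhiBasic d v u := by
  have key : ∀ u v, PhiBasic d u v ≤ PhiBasic d v u := fun u v =>
    sSup_le_sSup fun _ ⟨x, y, p, hx, hy, he⟩ => ⟨y, x, p, hy, hx, hsymm x y ▸ he⟩
  exact (key u v).antisymm (key v u)

theorem phiBasic_mono_left {u₁ u₂ : ℝ} (h : u₁ ≤ u₂) (v : ℝ) :
    PhiBasic d u₁ v ≤ PhiBasic d u₂ v :=
  sSup_le_sSup fun _ ⟨x, y, p, hx, hy, he⟩ => ⟨x, y, p, hx.trans h, hy, he⟩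

theorem ofReal_le_phiBasic (hsymm : ∀ x y, d x y = d y x) (x y z : X) :
    ENNReal.ofReal (d x y) ≤ PhiBasic d (d x z) (d z y) :=
  le_sSup ⟨x, y, z, (hsymm z x).le, le_rfl, rfl⟩

theorem phiBasic_le_supBallEDiam (hsymm : ∀ x y, d x y = d y x) {u v r : ℝ}
    (hu : u < r) (hv : v < r) : PhiBasic d u v ≤ supBallEDiam d r :=
  sSup_le fun _ ⟨_, _, p, hx, hy, he⟩ => he ▸ le_iSup_of_le p
    (ofReal_le_eDiam (mem_ball_of_le_of_lt hsymm hx hu) (mem_ball_of_le_of_lt hsymm hy hv))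

theorem tendsto_phiBasic_nhds_zero (hsymm : ∀ x y, d x y = d y x)
    (h : Tendsto (supBallEDiam d) (𝓝[>] 0) (𝓝 0)) :
    Tendsto (fun q : ℝ × ℝ => PhiBasic d q.1 q.2) (𝓝 (0, 0)) (𝓝 0) := by
  rw [ENNReal.tendsto_nhds_zero] at h ⊢
  intro ε hε
  obtain ⟨r, hrε, hr⟩ := ((h ε hε).and self_mem_nhdsWithin).exists
  filter_upwards [prod_mem_nhds (Iio_mem_nhds hr) (Iio_mem_nhds hr)] with q ⟨hq₁, hq₂⟩
  exact (phiBasic_le_supBallEDiam hsymm hq₁ hq₂).trans hrε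

theorem phiBasic_zero_zero (hsymm : ∀ x y, d x y = d y x)
    (h : Tendsto (supBallEDiam d) (𝓝[>] 0) (𝓝 0)) : PhiBasic d 0 0 = 0 :=
  tendsto_nhds_unique (tendsto_pure_nhds (fun q : ℝ × ℝ => PhiBasic d q.1 q.2) (0, 0))
    ((tendsto_phiBasic_nhds_zero hsymm h).mono_left (pure_le_nhds _))

theorem isTriangleFun_phiBasic (hsymm : ∀ x y, d x y = d y x)
    (h : Tendsto (supBallEDiam d) (𝓝[>] 0) (𝓝 0)) : IsTriangleFun d (PhiBasic d) :=
  ⟨phiBasic_comm hsymm, fun _ _ v _ h12 _ => phiBasic_mono_left h12 v,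
    phiBasic_zero_zero hsymm h, ofReal_le_phiBasic hsymm⟩

theorem regularAt00_phiBasic (hsymm : ∀ x y, d x y = d y x)
    (h : Tendsto (supBallEDiam d) (𝓝[>] 0) (𝓝 0)) : RegularAt00 (PhiBasic d) := by
  show Tendsto _ _ (𝓝 (PhiBasic d 0 0))
  rw [phiBasic_zero_zero hsymm h]
  exact (tendsto_phiBasic_nhds_zero hsymm h).mono_left nhdsWithin_le_nhds

end PhiBasic

end Semimetric

theorem statement2_general {X : Type*} (d : X → X → ℝ)
    (hpos : ∀ x y, 0 ≤ d x y) (hsymm : ∀ x y, d x y = d y x) :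
    (∃ Φ : ℝ → ℝ → ℝ≥0∞, IsTriangleFun d Φ ∧ RegularAt00 Φ) ↔
      Tendsto (fun r : ℝ => ⨆ p : X, EDiam d (Ball d p r))
        (nhdsWithin 0 (Set.Ioi 0)) (nhds 0) := by
  constructor
  · rintro ⟨Φ, hΦ, hreg⟩
    exact tendsto_supBallEDiam_of_regular hpos hsymm hΦ hreg
  · intro h
    exact ⟨PhiBasic d, isTriangleFun_phiBasic hsymm h, regularAt00_phiBasic hsymm h⟩

/-- regularity iff the sup of diameters of r-balls tends to 0 as r → 0. -/
theorem statement2 {X : Type*} [Nonempty X] (d : X → X → ℝ)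
    (hpos : ∀ x y, 0 ≤ d x y) (hsymm : ∀ x y, d x y = d y x)
    (hzero : ∀ x y, d x y = 0 ↔ x = y) :
    (∃ Φ : ℝ → ℝ → ℝ≥0∞, IsTriangleFun d Φ ∧ RegularAt00 Φ) ↔
      Tendsto (fun r : ℝ => ⨆ p : X, EDiam d (Ball d p r))
        (nhdsWithin 0 (Set.Ioi 0)) (nhds 0) :=
  statement2_general d hpos hsymm
end

section
/- In a regular semimetric space, for every ε > 0 there exists r > 0 such that for all x ∈ X, B(x,r) is contained in the interior of B(x,ε); consequently the topology of the semimetric space is Hausdorff. -/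
/-!
Regularity of `Φ` at `(0, 0)` gives `δ > 0` with `Φ(u, v) < ε` for `u, v < δ`, so the triangle
inequality `d(z, x) ≤ Φ(d(z, y), d(y, x))` puts the whole `δ`-ball of any `y ∈ B(x, δ)` inside
`B(x, ε)`. The same estimate shows that sets of interior points are open, and taking
`ε = d(a, b)` makes the `δ`-balls around `a` and `b` disjoint.
-/

open Set Filter Topology ENNReal

namespace Semimetric

variable {X : Type*}

theorem RegularAt00.exists_pos_forall_lt {Φ : ℝ → ℝ → ℝ≥0∞} (hreg : RegularAt00 Φ)
    (h00 : Φ 0 0 = 0) {c : ℝ≥0∞} (hc : 0 < c) :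
    ∃ δ > (0:ℝ), ∀ u v : ℝ, 0 ≤ u → u < δ → 0 ≤ v → v < δ → Φ u v < c := by
  have hlim : Tendsto (fun p : ℝ × ℝ => Φ p.1 p.2) (𝓝[Ici 0 ×ˢ Ici 0] (0, 0)) (𝓝 0) := by
    simpa only [RegularAt00, ContinuousWithinAt, h00] using hreg
  have hev := hlim (Iio_mem_nhds hc)
  rw [mem_map, Metric.mem_nhdsWithin_iff] at hev
  obtain ⟨δ, hδ, hball⟩ := hev
  refine ⟨δ, hδ, fun u v hu huδ hv hvδ => @hball (u, v) ⟨?_, hu, hv⟩⟩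
  rw [Metric.mem_ball, Prod.dist_eq, Real.dist_eq, Real.dist_eq, sub_zero, sub_zero,
    abs_of_nonneg hu, abs_of_nonneg hv]
  exact max_lt huδ hvδ

def InteriorS (d : X → X → ℝ) (A : Set X) : Set X := {y | ∃ ρ > (0:ℝ), Ball d y ρ ⊆ A}

theorem interiorS_subset {d : X → X → ℝ} (hself : ∀ x, d x x = 0) (A : Set X) :
    InteriorS d A ⊆ A := fun y ⟨ρ, hρ, hsub⟩ =>
  hsub (show d y y < ρ by rw [hself]; exact hρ)

theorem exists_pos_ball_subset_ball {d : X → X → ℝ} (hpos : ∀ x y, 0 ≤ d x y)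
    {Φ : ℝ → ℝ → ℝ≥0∞} (hΦ : IsTriangleFun d Φ) (hreg : RegularAt00 Φ) {ε : ℝ} (hε : 0 < ε) :
    ∃ δ > (0:ℝ), ∀ x y : X, y ∈ Ball d x δ → Ball d y δ ⊆ Ball d x ε := by
  obtain ⟨δ, hδ, hsmall⟩ := hreg.exists_pos_forall_lt hΦ.2.2.1 (ofReal_pos.2 hε)
  refine ⟨δ, hδ, fun x y hyx z hzy => ?_⟩
  have htri : ENNReal.ofReal (d z x) < ENNReal.ofReal ε :=
    (hΦ.2.2.2 z x y).trans_lt (hsmall _ _ (hpos z y) hzy (hpos y x) hyx)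
  exact (ofReal_lt_ofReal_iff hε).1 htri

theorem isOpenS_interiorS {d : X → X → ℝ} (hpos : ∀ x y, 0 ≤ d x y)
    {Φ : ℝ → ℝ → ℝ≥0∞} (hΦ : IsTriangleFun d Φ) (hreg : RegularAt00 Φ) (A : Set X) :
    IsOpenS d (InteriorS d A) := by
  rintro y ⟨ρ, hρ, hyA⟩
  obtain ⟨δ, hδ, hball⟩ := exists_pos_ball_subset_ball hpos hΦ hreg hρ
  exact ⟨δ, hδ, fun z hz => ⟨δ, hδ, (hball y z hz).trans hyA⟩⟩

theorem exists_pos_disjoint_ball {d : X → X → ℝ} (hpos : ∀ x y, 0 ≤ d x y)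
    (hsymm : ∀ x y, d x y = d y x) {Φ : ℝ → ℝ → ℝ≥0∞} (hΦ : IsTriangleFun d Φ)
    (hreg : RegularAt00 Φ) {a b : X} (hab : 0 < d a b) :
    ∃ δ > (0:ℝ), Disjoint (Ball d a δ) (Ball d b δ) := by
  obtain ⟨δ, hδ, hsmall⟩ := hreg.exists_pos_forall_lt hΦ.2.2.1 (ofReal_pos.2 hab)
  refine ⟨δ, hδ, disjoint_left.2 fun y (hya : d y a < δ) (hyb : d y b < δ) => ?_⟩
  rw [hsymm] at hya
  exact lt_irrefl _ ((hΦ.2.2.2 a b y).trans_lt (hsmall _ _ (hpos a y) hya (hpos y b) hyb))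

end Semimetric

open Semimetric

/-- uniform interiority of balls and Hausdorff separation. -/
theorem statement5 {X : Type*} (d : X → X → ℝ)
    (hpos : ∀ x y, 0 ≤ d x y) (hsymm : ∀ x y, d x y = d y x)
    (hzero : ∀ x y, d x y = 0 ↔ x = y)
    (Φ : ℝ → ℝ → ℝ≥0∞) (hΦ : IsTriangleFun d Φ) (hreg : RegularAt00 Φ) :
    (∀ ε > (0:ℝ), ∃ r > (0:ℝ), ∀ x : X,
        Ball d x r ⊆ {y : X | ∃ ρ > (0:ℝ), Ball d y ρ ⊆ Ball d x ε}) ∧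
    (∀ a b : X, a ≠ b → ∃ U V : Set X,
        IsOpenS d U ∧ IsOpenS d V ∧ a ∈ U ∧ b ∈ V ∧ Disjoint U V) := by
  have hself : ∀ x, d x x = 0 := fun x => (hzero x x).2 rfl
  constructor
  · intro ε hε
    obtain ⟨δ, hδ, hball⟩ := exists_pos_ball_subset_ball hpos hΦ hreg hε
    exact ⟨δ, hδ, fun x y hy => ⟨δ, hδ, hball x y hy⟩⟩
  · intro a b hab
    have hdab : 0 < d a b := (hpos a b).lt_of_ne fun h => hab ((hzero a b).1 h.symm)
    obtain ⟨δ, hδ, hdisj⟩ := exists_pos_disjoint_ball hpos hsymm hΦ hreg hdab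
    exact ⟨InteriorS d (Ball d a δ), InteriorS d (Ball d b δ),
      isOpenS_interiorS hpos hΦ hreg _, isOpenS_interiorS hpos hΦ hreg _,
      ⟨δ, hδ, subset_rfl⟩, ⟨δ, hδ, subset_rfl⟩,
      hdisj.mono (interiorS_subset hself _) (interiorS_subset hself _)⟩
end

section
/- In a complete regular semimetric space, a subset is compact if and only if it is closed and totally bounded (Hausdorff's theorem for semimetric spaces). -/
open Set Filter Topology ENNReal

namespace Semimetric

variable {X : Type*}

/-!
Continuity of `Φ` at `(0, 0)` yields a uniform triangle inequality: for every `ε > 0` there is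
`δ > 0` such that two points `δ`-close to a common point are `ε`-close.
It makes every ball contain an open set around its centre, so a compact set admits finite
subcovers by balls; this gives total boundedness, and closedness by separating a point outside
`H` from the finitely many centres. Conversely, if an open cover of `H` had no finite subcover,
total boundedness would give nested pieces of `H` without finite subcover inside balls of radii
tending to `0`; their points form a Cauchy sequence, whose limit lies in `H` because `H` is
closed, and a member of the cover around the limit swallows a whole piece.
-/

variable {d : X → X → ℝ}

def UniformTriangle (d : X → X → ℝ) : Prop :=
  ∀ ε > (0:ℝ), ∃ δ > (0:ℝ), δ ≤ ε ∧ ∀ x y z : X, d x z < δ → d z y < δ → d x y < ε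

theorem uniformTriangle_of_regularAt00 (hpos : ∀ x y, 0 ≤ d x y) {Φ : ℝ → ℝ → ℝ≥0∞}
    (hΦ : IsTriangleFun d Φ) (hreg : RegularAt00 Φ) : UniformTriangle d := by
  intro ε hε
  have hlim : Tendsto (fun p : ℝ × ℝ => Φ p.1 p.2) (𝓝[Ici 0 ×ˢ Ici 0] (0, 0)) (𝓝 0) := by
    simpa [RegularAt00, ContinuousWithinAt, hΦ.2.2.1] using hreg
  obtain ⟨δ, hδ, hsmall⟩ := Metric.mem_nhdsWithin_iff.1
    (hlim.eventually_lt_const (ENNReal.ofReal_pos.2 hε))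
  refine ⟨min δ ε, lt_min hδ hε, min_le_right _ _, fun x y z hxz hzy => ?_⟩
  have hmem : (d x z, d z y) ∈ Metric.ball ((0:ℝ), (0:ℝ)) δ ∩ (Ici 0 ×ˢ Ici 0) := by
    refine ⟨?_, hpos x z, hpos z y⟩
    rw [Metric.mem_ball, Prod.dist_eq, Real.dist_0_eq_abs, Real.dist_0_eq_abs,
      abs_of_nonneg (hpos x z), abs_of_nonneg (hpos z y)]
    exact max_lt (hxz.trans_le (min_le_left _ _)) (hzy.trans_le (min_le_left _ _))
  exact (ENNReal.ofReal_lt_ofReal_iff hε).1 ((hΦ.2.2.2 x y z).trans_lt (hsmall hmem))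

theorem UniformTriangle.exists_isOpenS_subset_ball (hut : UniformTriangle d)
    (hzero : ∀ x y, d x y = 0 ↔ x = y) (x : X) {r : ℝ} (hr : 0 < r) :
    ∃ U, IsOpenS d U ∧ x ∈ U ∧ U ⊆ Ball d x r := by
  refine ⟨{y | ∃ s > 0, Ball d y s ⊆ Ball d x r}, ?_, ⟨r, hr, subset_rfl⟩, ?_⟩
  · rintro y ⟨s, hs, hys⟩
    obtain ⟨δ, hδ, -, htri⟩ := hut s hs
    exact ⟨δ, hδ, fun z hz => ⟨δ, hδ, fun w hw => hys (htri w y z hw hz)⟩⟩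
  · rintro y ⟨s, hs, hys⟩
    exact hys (show d y y < s by rw [(hzero y y).2 rfl]; exact hs)

theorem IsCompactS.exists_finset_cover_ball (hut : UniformTriangle d)
    (hzero : ∀ x y, d x y = 0 ↔ x = y) {H : Set X} (hH : IsCompactS d H) (r : X → ℝ)
    (hr : ∀ x ∈ H, 0 < r x) :
    ∃ P : Finset X, ↑P ⊆ H ∧ H ⊆ ⋃ p ∈ P, Ball d p (r p) := by
  choose! U hUopen hxU hUball using fun x (hx : x ∈ H) =>
    hut.exists_isOpenS_subset_ball hzero x (hr x hx)
  obtain ⟨F, hFC, hFfin, hHF⟩ := hH (U '' H) (forall_mem_image.2 hUopen)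
    fun x hx => mem_sUnion.2 ⟨U x, mem_image_of_mem U hx, hxU x hx⟩
  obtain ⟨P, hPH, hPfin, hHP⟩ :=
    exists_subset_image_finite_and (p := fun F => H ⊆ ⋃₀ F) |>.1 ⟨F, hFC, hFfin, hHF⟩
  refine ⟨hPfin.toFinset, by simpa using hPH, fun y hy => ?_⟩
  obtain ⟨x, hxP, hyx⟩ := mem_iUnion₂.1 (sUnion_image U P ▸ hHP hy)
  exact mem_biUnion (hPfin.mem_toFinset.2 hxP) (hUball x (hPH hxP) hyx)

theorem IsCompactS.totBddS (hut : UniformTriangle d) (hzero : ∀ x y, d x y = 0 ↔ x = y)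
    {H : Set X} (hH : IsCompactS d H) : TotBddS d H := fun ε hε =>
  (hH.exists_finset_cover_ball hut hzero (fun _ => ε) fun _ _ => hε).imp fun _ hP => hP.2

theorem IsCompactS.isClosedS (hut : UniformTriangle d) (hpos : ∀ x y, 0 ≤ d x y)
    (hsymm : ∀ x y, d x y = d y x) (hzero : ∀ x y, d x y = 0 ↔ x = y) {H : Set X}
    (hH : IsCompactS d H) : IsClosedS d H := by
  intro p hp
  have hdist : ∀ x ∈ H, 0 < d x p := fun x hx =>
    (hpos x p).lt_of_ne fun h => hp ((hzero x p).1 h.symm ▸ hx)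
  choose! δ hδ _ htri using fun x (hx : x ∈ H) => hut (d x p) (hdist x hx)
  obtain ⟨P, hPH, hHP⟩ := hH.exists_finset_cover_ball hut hzero δ hδ
  obtain ⟨r, hr, hrδ⟩ : ∃ r, 0 < r ∧ ∀ x ∈ P, r ≤ δ x :=
    ((eventually_mem_nhdsWithin (a := (0:ℝ)) (s := Ioi 0)).and (P.eventually_all.2 fun x hx =>
      nhdsWithin_le_nhds (eventually_le_nhds (hδ x (hPH hx))))).exists
  refine ⟨r, hr, fun y hyp hyH => ?_⟩
  obtain ⟨x, hxP, hyx⟩ := mem_iUnion₂.1 (hHP hyH)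
  have hyx' : d x y < δ x := by rw [hsymm]; exact hyx
  exact lt_irrefl _ (htri x (hPH hxP) x p y hyx' (lt_of_lt_of_le hyp (hrδ x hxP)))

def FinCovered (C : Set (Set X)) (S : Set X) : Prop := ∃ F ⊆ C, F.Finite ∧ S ⊆ ⋃₀ F

theorem finCovered_of_forall_inter_ball {C : Set (Set X)} {H S : Set X} (htb : TotBddS d H)
    (hSH : S ⊆ H) {δ : ℝ} (hδ : 0 < δ) (h : ∀ q, FinCovered C (S ∩ Ball d q δ)) :
    FinCovered C S := by
  obtain ⟨P, hP⟩ := htb δ hδ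
  choose F hFC hFfin hFcov using h
  refine ⟨⋃ p ∈ P, F p, iUnion₂_subset fun p _ => hFC p,
    P.finite_toSet.biUnion fun p _ => hFfin p, fun x hx => ?_⟩
  obtain ⟨p, hpP, hxp⟩ := mem_iUnion₂.1 (hP (hSH hx))
  obtain ⟨U, hU, hxU⟩ := hFcov p ⟨hx, hxp⟩
  exact ⟨U, mem_iUnion₂.2 ⟨p, hpP, hU⟩, hxU⟩

theorem exists_antitone_seq {α : Type*} (P : Set α → Prop) (Q : ℕ → Set α → Prop) {S₀ : Set α}
    (h₀ : P S₀) (step : ∀ n S, P S → ∃ S' ⊆ S, P S' ∧ Q n S') :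
    ∃ T : ℕ → Set α, Antitone T ∧ ∀ n, P (T n) ∧ Q n (T (n + 1)) := by
  choose! next hsub hP hQ using step
  let T : ℕ → Set α := fun n => Nat.rec S₀ next n
  have hT : ∀ n, P (T n) := fun n => Nat.rec h₀ (fun n ih => hP n _ ih) n
  exact ⟨T, antitone_nat_of_succ_le fun n => hsub n _ (hT n),
    fun n => ⟨hT n, hQ n _ (hT n)⟩⟩

theorem IsClosedS.mem_of_convTo {H : Set X} (hH : IsClosedS d H) {x : ℕ → X} {p : X}
    (hx : ∀ n, x n ∈ H) (hxp : ConvTo d x p) : p ∈ H := by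
  by_contra hp
  obtain ⟨r, hr, hball⟩ := hH p hp
  obtain ⟨n, hn⟩ := (hxp.eventually (gt_mem_nhds hr)).exists
  exact hball hn (hx n)

theorem isCauchyS_of_forall_le_dist_lt (hsymm : ∀ x y, d x y = d y x) {ρ ε : ℕ → ℝ} {x q : ℕ → X}
    (hρ : ∀ n a b c, d a c < ρ n → d c b < ρ n → d a b < ε n) (hε : Tendsto ε atTop (𝓝 0))
    (hxq : ∀ n m, n ≤ m → d (x m) (q n) < ρ n) : IsCauchyS d x := by
  intro η hη
  obtain ⟨N, hN⟩ := (hε.eventually (gt_mem_nhds hη)).exists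
  refine ⟨N, fun m hm n hn => (hρ N _ _ (q N) (hxq N m hm) ?_).trans hN⟩
  rw [hsymm]
  exact hxq N n hn

theorem UniformTriangle.eventually_ball_subset_ball (hut : UniformTriangle d)
    (hsymm : ∀ x y, d x y = d y x) {ρ : ℕ → ℝ} {x q : ℕ → X}
    (hρ : Tendsto ρ atTop (𝓝 0)) (hxq : ∀ n, d (x n) (q n) < ρ n) {p : X}
    (hxp : ConvTo d x p) {r : ℝ} (hr : 0 < r) :
    ∀ᶠ n in atTop, Ball d (q n) (ρ n) ⊆ Ball d p r := by
  obtain ⟨δ₁, hδ₁, -, htri₁⟩ := hut r hr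
  obtain ⟨δ₂, hδ₂, hδ₂δ₁, htri₂⟩ := hut δ₁ hδ₁
  filter_upwards [hρ.eventually (gt_mem_nhds hδ₂), hxp.eventually (gt_mem_nhds hδ₂)]
    with n hρn hxpn y hy
  have hqp : d (q n) p < δ₁ := htri₂ _ _ (x n) (by rw [hsymm]; exact (hxq n).trans hρn) hxpn
  exact htri₁ y p (q n) (hy.trans (hρn.trans_le hδ₂δ₁)) hqp

theorem UniformTriangle.exists_radii (hut : UniformTriangle d) :
    ∃ ρ : ℕ → ℝ, (∀ n, 0 < ρ n) ∧ Tendsto ρ atTop (𝓝 0) ∧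
      ∀ n a b c, d a c < ρ n → d c b < ρ n → d a b < 1 / ((n : ℝ) + 1) := by
  choose ρ hρ hρle htri using fun n : ℕ => hut (1 / ((n : ℝ) + 1)) (by positivity)
  exact ⟨ρ, hρ, squeeze_zero (fun n => (hρ n).le) hρle tendsto_one_div_add_atTop_nhds_zero_nat,
    htri⟩

theorem isCompactS_of_isClosedS_of_totBddS (hsymm : ∀ x y, d x y = d y x)
    (hut : UniformTriangle d) (hcomplete : IsCompleteS d) {H : Set X}
    (hcl : IsClosedS d H) (htb : TotBddS d H) : IsCompactS d H := by
  intro C hC hHC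
  by_contra hH
  obtain ⟨ρ, hρpos, hρ, hρtri⟩ := hut.exists_radii
  obtain ⟨T, hTanti, hT⟩ := exists_antitone_seq (fun S => S ⊆ H ∧ ¬ FinCovered C S)
    (fun n S => ∃ q, S ⊆ Ball d q (ρ n)) ⟨subset_rfl, hH⟩ fun n S ⟨hSH, hS⟩ => by
      obtain ⟨q, hq⟩ : ∃ q, ¬ FinCovered C (S ∩ Ball d q (ρ n)) := by
        by_contra! h
        exact hS (finCovered_of_forall_inter_ball htb hSH (hρpos n) h)
      exact ⟨_, inter_subset_left, ⟨inter_subset_left.trans hSH, hq⟩, q, inter_subset_right⟩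
  have hne : ∀ n, (T n).Nonempty := fun n => nonempty_iff_ne_empty.2 fun h =>
    (hT n).1.2 ⟨∅, empty_subset _, finite_empty, h ▸ empty_subset _⟩
  choose x hx using fun n => hne (n + 1)
  choose q hq using fun n => (hT n).2
  have hxq : ∀ n m, n ≤ m → d (x m) (q n) < ρ n := fun n m hnm =>
    hq n (hTanti (Nat.succ_le_succ hnm) (hx m))
  obtain ⟨p, hxp⟩ := hcomplete x (isCauchyS_of_forall_le_dist_lt hsymm hρtri
    tendsto_one_div_add_atTop_nhds_zero_nat hxq)
  obtain ⟨U, hUC, hpU⟩ := hHC (hcl.mem_of_convTo (fun n => (hT (n + 1)).1.1 (hx n)) hxp)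
  obtain ⟨r, hr, hrU⟩ := hC U hUC p hpU
  obtain ⟨n, hn⟩ := (hut.eventually_ball_subset_ball hsymm hρ (fun n => hxq n n le_rfl)
    hxp hr).exists
  refine (hT (n + 1)).1.2 ⟨{U}, singleton_subset_iff.2 hUC, finite_singleton U, ?_⟩
  rw [sUnion_singleton]
  exact (hq n).trans (hn.trans hrU)

end Semimetric

open Semimetric

/-- Hausdorff's theorem in complete regular semimetric spaces. -/
theorem statement9 {X : Type*} (d : X → X → ℝ)
    (hpos : ∀ x y, 0 ≤ d x y) (hsymm : ∀ x y, d x y = d y x)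
    (hzero : ∀ x y, d x y = 0 ↔ x = y)
    (hcomplete : IsCompleteS d)
    (Φ : ℝ → ℝ → ℝ≥0∞) (hΦ : IsTriangleFun d Φ) (hreg : RegularAt00 Φ)
    (H : Set X) :
    IsCompactS d H ↔ IsClosedS d H ∧ TotBddS d H := by
  have hut : UniformTriangle d := uniformTriangle_of_regularAt00 hpos hΦ hreg
  exact ⟨fun hH => ⟨hH.isClosedS hut hpos hsymm hzero, hH.totBddS hut hzero⟩,
    fun ⟨hcl, htb⟩ => isCompactS_of_isClosedS_of_totBddS hsymm hut hcomplete hcl htb⟩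
end

section
/- If (X,d) is a semimetric space with a real-valued upper semicontinuous triangle function Φ, then the Hausdorff–Pompeiu distance D is finite on pairs of nonempty closed bounded sets, D(A,B) = 0 implies A = B for such sets, D is symmetric, and Φ is a triangle function for D; hence the family F(X) of nonempty closed bounded subsets equipped with D is a semimetric space. -/
open Set Filter Topology ENNReal

open Semimetric

/-!
Chaining near points through a middle set `C`: if each point of `A` lies within `s₁` of `C` and
each point of `C` within `s₂` of `B`, the triangle function bounds the resulting distances from
`A` to `B` by `Φ s₁ s₂`. Hence `D(A,B) ≤ Φ(s₁,s₂)` for all `s₁ > D(A,C)`, `s₂ > D(C,B)`, and upper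
semicontinuity of `Φ` lets `s₁, s₂` decrease to `D(A,C), D(C,B)`. The same chaining through one
base point of each set gives finiteness, and `D(A,B) = 0` puts every point of `A` in the closure
of `B`, which is `B`.
-/

lemma UpperSemicontinuousOn.exists_pos_lt_add_add {f : ℝ × ℝ → ℝ}
    (hf : UpperSemicontinuousOn f (Ici 0 ×ˢ Ici 0)) {u v c : ℝ} (hu : 0 ≤ u) (hv : 0 ≤ v)
    (hc : f (u, v) < c) : ∃ δ > 0, f (u + δ, v + δ) < c := by
  have hshift : Tendsto (fun δ : ℝ => (u + δ, v + δ)) (𝓝[>] 0) (𝓝[Ici 0 ×ˢ Ici 0] (u, v)) := by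
    refine tendsto_nhdsWithin_of_tendsto_nhds_of_eventually_within _ ?_ ?_
    · have hcont : Continuous fun δ : ℝ => (u + δ, v + δ) := by fun_prop
      simpa using (hcont.tendsto 0).mono_left nhdsWithin_le_nhds
    · filter_upwards [self_mem_nhdsWithin] with δ (hδ : 0 < δ)
      exact ⟨by simp only [mem_Ici]; linarith, by simp only [mem_Ici]; linarith⟩
  obtain ⟨δ, hlt, hδ⟩ :=
    ((hshift.eventually (hf (u, v) ⟨hu, hv⟩ c hc)).and self_mem_nhdsWithin).exists
  exact ⟨δ, hδ, hlt⟩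

namespace Semimetric

variable {X : Type*} {d : X → X → ℝ} {A B C : Set X}

lemma hd_comm (A B : Set X) : HD d A B = HD d B A := by
  unfold HD
  congr 1
  ext ε
  exact ⟨fun ⟨hε, hAB, hBA⟩ => ⟨hε, hBA, hAB⟩, fun ⟨hε, hBA, hAB⟩ => ⟨hε, hAB, hBA⟩⟩

lemma hd_le_ofReal {r : ℝ} (hr : 0 ≤ r) (hAB : ∀ a ∈ A, ∃ b ∈ B, d a b ≤ r)
    (hBA : ∀ b ∈ B, ∃ a ∈ A, d b a ≤ r) : HD d A B ≤ ENNReal.ofReal r := by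
  refine ENNReal.le_of_forall_pos_le_add fun η hη _ => ?_
  have hrη : r < r + η := by simpa using hη
  have hlt : ∀ {x y : X}, d x y ≤ r → ENNReal.ofReal (d x y) < ENNReal.ofReal (r + η) :=
    fun hxy => (ENNReal.ofReal_lt_ofReal_iff (by positivity)).2 (hxy.trans_lt hrη)
  rw [← ENNReal.ofReal_coe_nnreal, ← ENNReal.ofReal_add hr η.coe_nonneg]
  refine sInf_le ⟨ENNReal.ofReal_pos.2 (by positivity), fun a ha => ?_, fun b hb => ?_⟩
  · obtain ⟨b, hb, hab⟩ := hAB a ha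
    exact ⟨b, hb, hlt hab⟩
  · obtain ⟨a, ha, hba⟩ := hBA b hb
    exact ⟨a, ha, hlt hba⟩

lemma exists_dist_lt_of_hd_lt {r : ℝ} (h : HD d A B < ENNReal.ofReal r) :
    ∀ a ∈ A, ∃ b ∈ B, d a b < r := by
  obtain ⟨ε, ⟨-, hAB, -⟩, hε⟩ := sInf_lt_iff.1 h
  intro a ha
  obtain ⟨b, hb, hab⟩ := hAB a ha
  exact ⟨b, hb, (ENNReal.ofReal_lt_ofReal_iff'.1 (hab.trans hε)).1⟩

lemma subset_of_hd_eq_zero (hsymm : ∀ x y, d x y = d y x) (hB : IsClosedS d B)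
    (h : HD d A B = 0) : A ⊆ B := by
  intro a ha
  by_contra haB
  obtain ⟨r, hr, hball⟩ := hB a haB
  have hlt : HD d A B < ENNReal.ofReal r := by rw [h]; exact ENNReal.ofReal_pos.2 hr
  obtain ⟨b, hb, hab⟩ := exists_dist_lt_of_hd_lt hlt a ha
  exact hball (show d b a < r by rwa [hsymm]) hb

lemma eq_of_hd_eq_zero (hsymm : ∀ x y, d x y = d y x) (hA : IsClosedS d A)
    (hB : IsClosedS d B) (h : HD d A B = 0) : A = B :=
  (subset_of_hd_eq_zero hsymm hB h).antisymm
    (subset_of_hd_eq_zero hsymm hA (by rwa [hd_comm]))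

section TriangleFun

variable {Φ : ℝ → ℝ → ℝ}

lemma IsTriangleFunR.dist_le_of_le (hpos : ∀ x y, 0 ≤ d x y) (hΦ : IsTriangleFunR d Φ)
    {x y z : X} {s t : ℝ} (hxz : d x z ≤ s) (hzy : d z y ≤ t) : d x y ≤ Φ s t := by
  obtain ⟨hΦsymm, hΦmono, -, -, hΦtri⟩ := hΦ
  calc d x y ≤ Φ (d x z) (d z y) := hΦtri x y z
    _ ≤ Φ s (d z y) := hΦmono _ _ _ (hpos x z) hxz (hpos z y)
    _ = Φ (d z y) s := hΦsymm _ _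
    _ ≤ Φ t s := hΦmono _ _ _ (hpos z y) hzy ((hpos x z).trans hxz)
    _ = Φ s t := hΦsymm _ _

lemma hd_ne_top (hpos : ∀ x y, 0 ≤ d x y) (hΦ : IsTriangleFunR d Φ)
    (hAne : A.Nonempty) (hAbdd : BoundedS d A) (hBne : B.Nonempty) (hBbdd : BoundedS d B) :
    HD d A B ≠ ⊤ := by
  obtain ⟨a₀, ha₀⟩ := hAne
  obtain ⟨b₀, hb₀⟩ := hBne
  obtain ⟨MA, hMA⟩ := hAbdd
  obtain ⟨MB, hMB⟩ := hBbdd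
  have hMA0 : 0 ≤ MA := (hpos a₀ a₀).trans (hMA a₀ ha₀ a₀ ha₀)
  set r := max (Φ MA (d a₀ b₀)) (Φ MB (d b₀ a₀))
  have hr : 0 ≤ r := le_max_of_le_left (hΦ.2.2.1 _ _ hMA0 (hpos a₀ b₀))
  refine ne_top_of_le_ne_top ENNReal.ofReal_ne_top (hd_le_ofReal hr ?_ ?_)
  · exact fun a ha => ⟨b₀, hb₀, le_max_of_le_left
      (hΦ.dist_le_of_le hpos (hMA a ha a₀ ha₀) le_rfl)⟩
  · exact fun b hb => ⟨a₀, ha₀, le_max_of_le_right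
      (hΦ.dist_le_of_le hpos (hMB b hb b₀ hb₀) le_rfl)⟩

lemma hd_le_of_hd_lt_of_hd_lt (hpos : ∀ x y, 0 ≤ d x y) (hΦ : IsTriangleFunR d Φ)
    {s₁ s₂ : ℝ} (h₁ : HD d A C < ENNReal.ofReal s₁) (h₂ : HD d C B < ENNReal.ofReal s₂) :
    HD d A B ≤ ENNReal.ofReal (Φ s₁ s₂) := by
  have hs₁ : 0 ≤ s₁ := (ENNReal.ofReal_pos.1 (pos_of_gt h₁)).le
  have hs₂ : 0 ≤ s₂ := (ENNReal.ofReal_pos.1 (pos_of_gt h₂)).le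
  refine hd_le_ofReal (hΦ.2.2.1 _ _ hs₁ hs₂) (fun a ha => ?_) (fun b hb => ?_)
  · obtain ⟨c, hc, hac⟩ := exists_dist_lt_of_hd_lt h₁ a ha
    obtain ⟨b, hb, hcb⟩ := exists_dist_lt_of_hd_lt h₂ c hc
    exact ⟨b, hb, hΦ.dist_le_of_le hpos hac.le hcb.le⟩
  · rw [hd_comm] at h₁ h₂
    obtain ⟨c, hc, hbc⟩ := exists_dist_lt_of_hd_lt h₂ b hb
    obtain ⟨a, ha, hca⟩ := exists_dist_lt_of_hd_lt h₁ c hc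
    exact ⟨a, ha, hΦ.1 s₁ s₂ ▸ hΦ.dist_le_of_le hpos hbc.le hca.le⟩

lemma hd_le_triangleFun (hpos : ∀ x y, 0 ≤ d x y) (hΦ : IsTriangleFunR d Φ)
    (husc : UpperSemicontinuousOn (fun p : ℝ × ℝ => Φ p.1 p.2) (Ici 0 ×ˢ Ici 0))
    (hAC : HD d A C ≠ ⊤) (hCB : HD d C B ≠ ⊤) :
    HD d A B ≤ ENNReal.ofReal (Φ (HD d A C).toReal (HD d C B).toReal) := by
  set u := (HD d A C).toReal
  set v := (HD d C B).toReal
  have hΦuv : 0 ≤ Φ u v := hΦ.2.2.1 _ _ ENNReal.toReal_nonneg ENNReal.toReal_nonneg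
  refine ENNReal.le_of_forall_pos_le_add fun ε hε _ => ?_
  obtain ⟨δ, hδ, hlt⟩ := husc.exists_pos_lt_add_add ENNReal.toReal_nonneg
    ENNReal.toReal_nonneg (show Φ u v < Φ u v + ε by simpa using hε)
  have h₁ : HD d A C < ENNReal.ofReal (u + δ) :=
    (ENNReal.lt_ofReal_iff_toReal_lt hAC).2 (lt_add_of_pos_right u hδ)
  have h₂ : HD d C B < ENNReal.ofReal (v + δ) :=
    (ENNReal.lt_ofReal_iff_toReal_lt hCB).2 (lt_add_of_pos_right v hδ)
  calc HD d A B ≤ ENNReal.ofReal (Φ (u + δ) (v + δ)) := hd_le_of_hd_lt_of_hd_lt hpos hΦ h₁ h₂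
    _ ≤ ENNReal.ofReal (Φ u v + ε) := ENNReal.ofReal_le_ofReal hlt.le
    _ = ENNReal.ofReal (Φ u v) + ε := by
      rw [ENNReal.ofReal_add hΦuv ε.coe_nonneg, ENNReal.ofReal_coe_nnreal]

end TriangleFun

end Semimetric

theorem statement12_general {X : Type*} (d : X → X → ℝ)
    (hpos : ∀ x y, 0 ≤ d x y) (hsymm : ∀ x y, d x y = d y x)
    (Φ : ℝ → ℝ → ℝ) (hΦ : IsTriangleFunR d Φ)
    (husc : UpperSemicontinuousOn (fun p : ℝ × ℝ => Φ p.1 p.2) (Set.Ici 0 ×ˢ Set.Ici 0)) :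
    (∀ A B : Set X, (A.Nonempty ∧ IsClosedS d A ∧ BoundedS d A) →
        (B.Nonempty ∧ IsClosedS d B ∧ BoundedS d B) → HD d A B ≠ ⊤) ∧
    (∀ A B : Set X, (A.Nonempty ∧ IsClosedS d A ∧ BoundedS d A) →
        (B.Nonempty ∧ IsClosedS d B ∧ BoundedS d B) → HD d A B = 0 → A = B) ∧
    (∀ A B : Set X, HD d A B = HD d B A) ∧
    (∀ A B C : Set X, (A.Nonempty ∧ IsClosedS d A ∧ BoundedS d A) →
        (B.Nonempty ∧ IsClosedS d B ∧ BoundedS d B) →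
        (C.Nonempty ∧ IsClosedS d C ∧ BoundedS d C) →
        HD d A B ≤ ENNReal.ofReal (Φ (HD d A C).toReal (HD d C B).toReal)) := by
  have hfin : ∀ A B : Set X, (A.Nonempty ∧ IsClosedS d A ∧ BoundedS d A) →
      (B.Nonempty ∧ IsClosedS d B ∧ BoundedS d B) → HD d A B ≠ ⊤ :=
    fun A B hA hB => hd_ne_top hpos hΦ hA.1 hA.2.2 hB.1 hB.2.2
  refine ⟨hfin, fun A B hA hB => eq_of_hd_eq_zero hsymm hA.2.1 hB.2.1, hd_comm, ?_⟩
  intro A B C hA hB hC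
  exact hd_le_triangleFun hpos hΦ husc (hfin A C hA hC) (hfin C B hC hB)

/-- (F(X), D) is a semimetric space with triangle function Φ. -/
theorem statement12 {X : Type*} (d : X → X → ℝ)
    (hpos : ∀ x y, 0 ≤ d x y) (hsymm : ∀ x y, d x y = d y x)
    (hzero : ∀ x y, d x y = 0 ↔ x = y)
    (Φ : ℝ → ℝ → ℝ) (hΦ : IsTriangleFunR d Φ)
    (husc : UpperSemicontinuousOn (fun p : ℝ × ℝ => Φ p.1 p.2) (Set.Ici 0 ×ˢ Set.Ici 0)) :
    (∀ A B : Set X, (A.Nonempty ∧ IsClosedS d A ∧ BoundedS d A) →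
        (B.Nonempty ∧ IsClosedS d B ∧ BoundedS d B) → HD d A B ≠ ⊤) ∧
    (∀ A B : Set X, (A.Nonempty ∧ IsClosedS d A ∧ BoundedS d A) →
        (B.Nonempty ∧ IsClosedS d B ∧ BoundedS d B) → HD d A B = 0 → A = B) ∧
    (∀ A B : Set X, HD d A B = HD d B A) ∧
    (∀ A B C : Set X, (A.Nonempty ∧ IsClosedS d A ∧ BoundedS d A) →
        (B.Nonempty ∧ IsClosedS d B ∧ BoundedS d B) →
        (C.Nonempty ∧ IsClosedS d C ∧ BoundedS d C) →
        HD d A B ≤ ENNReal.ofReal (Φ (HD d A C).toReal (HD d C B).toReal)) :=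
  statement12_general d hpos hsymm Φ hΦ husc
end

section
/- The Hausdorff–Pompeiu distance satisfies the triangle inequality D(A,B) ≤ Φ(D(A,C), D(C,B)) for all nonempty closed bounded subsets A, B, C of a semimetric space whose triangle function Φ is real-valued and upper semicontinuous. -/
open Set Filter Topology ENNReal

open Semimetric
/-! Chain the ε-nets of `A, C` and of `C, B` through `C`: this gives `D(A,B) ≤ Φ(ε, ε')` for all
`ε > D(A,C)`, `ε' > D(C,B)`, and upper semicontinuity of `Φ` lets `(ε, ε')` decrease to
`(D(A,C), D(C,B))`. -/

namespace Semimetric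

variable {X : Type*} {d : X → X → ℝ} {A B C : Set X}

theorem HD_le_ofReal {t : ℝ} (ht : 0 ≤ t) (hAB : ∀ a ∈ A, ∃ b ∈ B, d a b ≤ t)
    (hBA : ∀ b ∈ B, ∃ a ∈ A, d b a ≤ t) : HD d A B ≤ ENNReal.ofReal t := by
  refine ENNReal.le_of_forall_pos_le_add fun η hη _ => ?_
  have htη : 0 < t + η := by positivity
  have hlt : ∀ {x y : X}, d x y ≤ t → ENNReal.ofReal (d x y) < ENNReal.ofReal (t + η) := fun h =>
    (ENNReal.ofReal_lt_ofReal_iff htη).2 (by linarith [(hη : (0 : ℝ) < η)])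
  rw [← ENNReal.ofReal_coe_nnreal, ← ENNReal.ofReal_add ht η.coe_nonneg]
  refine sInf_le ⟨ENNReal.ofReal_pos.2 htη, fun a ha => ?_, fun b hb => ?_⟩
  · obtain ⟨b, hb, hab⟩ := hAB a ha
    exact ⟨b, hb, hlt hab⟩
  · obtain ⟨a, ha, hba⟩ := hBA b hb
    exact ⟨a, ha, hlt hba⟩

theorem exists_dist_lt_of_HD_lt {ε : ℝ} (h : HD d A B < ENNReal.ofReal ε) :
    (∀ a ∈ A, ∃ b ∈ B, d a b < ε) ∧ (∀ b ∈ B, ∃ a ∈ A, d b a < ε) := by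
  obtain ⟨e, ⟨-, hAB, hBA⟩, he⟩ := sInf_lt_iff.1 h
  have hlt : ∀ {x y : X}, ENNReal.ofReal (d x y) < e → d x y < ε := fun h =>
    (ENNReal.ofReal_lt_ofReal_iff'.1 (h.trans he)).1
  refine ⟨fun a ha => ?_, fun b hb => ?_⟩
  · obtain ⟨b, hb, hab⟩ := hAB a ha
    exact ⟨b, hb, hlt hab⟩
  · obtain ⟨a, ha, hba⟩ := hBA b hb
    exact ⟨a, ha, hlt hba⟩

variable {Φ : ℝ → ℝ → ℝ}

theorem IsTriangleFunR.le_of_le (hΦ : IsTriangleFunR d Φ) (hpos : ∀ x y, 0 ≤ d x y)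
    {x y z : X} {u v : ℝ} (hxz : d x z ≤ u) (hzy : d z y ≤ v) : d x y ≤ Φ u v := by
  obtain ⟨hsymm, hmono, -, -, htri⟩ := hΦ
  calc d x y ≤ Φ (d x z) (d z y) := htri x y z
    _ ≤ Φ u (d z y) := hmono _ _ _ (hpos x z) hxz (hpos z y)
    _ = Φ (d z y) u := hsymm _ _
    _ ≤ Φ v u := hmono _ _ _ (hpos z y) hzy ((hpos x z).trans hxz)
    _ = Φ u v := hsymm _ _

theorem HD_lt_top (hΦ : IsTriangleFunR d Φ) (hpos : ∀ x y, 0 ≤ d x y)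
    (hA : A.Nonempty) (hC : C.Nonempty) (hAb : BoundedS d A) (hCb : BoundedS d C) :
    HD d A C < ⊤ := by
  obtain ⟨a₀, ha₀⟩ := hA
  obtain ⟨c₀, hc₀⟩ := hC
  obtain ⟨MA, hMA⟩ := hAb
  obtain ⟨MC, hMC⟩ := hCb
  set t := max (Φ MA (d a₀ c₀)) (Φ MC (d c₀ a₀))
  have hAC : ∀ a ∈ A, d a c₀ ≤ t := fun a ha =>
    (hΦ.le_of_le hpos (hMA a ha a₀ ha₀) le_rfl).trans (le_max_left _ _)
  have hCA : ∀ c ∈ C, d c a₀ ≤ t := fun c hc =>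
    (hΦ.le_of_le hpos (hMC c hc c₀ hc₀) le_rfl).trans (le_max_right _ _)
  calc HD d A C ≤ ENNReal.ofReal t :=
        HD_le_ofReal ((hpos a₀ c₀).trans (hAC a₀ ha₀)) (fun a ha => ⟨c₀, hc₀, hAC a ha⟩)
          (fun c hc => ⟨a₀, ha₀, hCA c hc⟩)
    _ < ⊤ := ENNReal.ofReal_lt_top

theorem HD_le_of_HD_lt (hΦ : IsTriangleFunR d Φ) (hpos : ∀ x y, 0 ≤ d x y) {ε ε' : ℝ}
    (hAC : HD d A C < ENNReal.ofReal ε) (hCB : HD d C B < ENNReal.ofReal ε') :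
    HD d A B ≤ ENNReal.ofReal (Φ ε ε') := by
  have hε : 0 < ε := ENNReal.ofReal_pos.1 (pos_of_gt hAC)
  have hε' : 0 < ε' := ENNReal.ofReal_pos.1 (pos_of_gt hCB)
  obtain ⟨hAC, hCA⟩ := exists_dist_lt_of_HD_lt hAC
  obtain ⟨hCB, hBC⟩ := exists_dist_lt_of_HD_lt hCB
  refine HD_le_ofReal (hΦ.2.2.1 ε ε' hε.le hε'.le) (fun a ha => ?_) (fun b hb => ?_)
  · obtain ⟨c, hc, hac⟩ := hAC a ha
    obtain ⟨b, hb, hcb⟩ := hCB c hc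
    exact ⟨b, hb, hΦ.le_of_le hpos hac.le hcb.le⟩
  · obtain ⟨c, hc, hbc⟩ := hBC b hb
    obtain ⟨a, ha, hca⟩ := hCA c hc
    exact ⟨a, ha, hΦ.1 ε ε' ▸ hΦ.le_of_le hpos hbc.le hca.le⟩

theorem le_ofReal_of_upperSemicontinuousWithinAt {f : ℝ × ℝ → ℝ} {r s : ℝ} {a : ℝ≥0∞}
    (hf : UpperSemicontinuousWithinAt f (Ici 0 ×ˢ Ici 0) (r, s)) (hr : 0 ≤ r) (hs : 0 ≤ s)
    (h : ∀ ε > r, ∀ ε' > s, a ≤ ENNReal.ofReal (f (ε, ε'))) : a ≤ ENNReal.ofReal (f (r, s)) := by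
  refine ENNReal.le_of_forall_pos_le_add fun η hη _ => ?_
  have hdiag : Tendsto (fun δ : ℝ => (r + δ, s + δ)) (𝓝[>] 0) (𝓝[Ici 0 ×ˢ Ici 0] (r, s)) := by
    refine tendsto_nhdsWithin_iff.2 ⟨?_, ?_⟩
    · have : Continuous fun δ : ℝ => (r + δ, s + δ) := by fun_prop
      simpa using (this.tendsto 0).mono_left nhdsWithin_le_nhds
    · filter_upwards [self_mem_nhdsWithin] with δ (hδ : 0 < δ)
      exact ⟨by simp only [mem_Ici]; linarith, by simp only [mem_Ici]; linarith⟩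
  obtain ⟨δ, hfδ, hδ : 0 < δ⟩ :=
    ((hdiag.eventually (hf _ (lt_add_of_pos_right _ hη))).and self_mem_nhdsWithin).exists
  calc a ≤ ENNReal.ofReal (f (r + δ, s + δ)) := h _ (by linarith) _ (by linarith)
    _ ≤ ENNReal.ofReal (f (r, s) + η) := ENNReal.ofReal_le_ofReal hfδ.le
    _ ≤ ENNReal.ofReal (f (r, s)) + η :=
        ENNReal.ofReal_add_le.trans_eq (by rw [ENNReal.ofReal_coe_nnreal])

end Semimetric

theorem statement13_general {X : Type*} (d : X → X → ℝ)
    (hpos : ∀ x y, 0 ≤ d x y)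
    (Φ : ℝ → ℝ → ℝ) (hΦ : IsTriangleFunR d Φ)
    (husc : UpperSemicontinuousOn (fun p : ℝ × ℝ => Φ p.1 p.2) (Set.Ici 0 ×ˢ Set.Ici 0))
    (A B C : Set X)
    (hA : A.Nonempty ∧ IsClosedS d A ∧ BoundedS d A)
    (hB : B.Nonempty ∧ IsClosedS d B ∧ BoundedS d B)
    (hC : C.Nonempty ∧ IsClosedS d C ∧ BoundedS d C) :
    HD d A B ≤ ENNReal.ofReal (Φ (HD d A C).toReal (HD d C B).toReal) := by
  obtain ⟨hAne, -, hAb⟩ := hA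
  obtain ⟨hBne, -, hBb⟩ := hB
  obtain ⟨hCne, -, hCb⟩ := hC
  have hAC := HD_lt_top hΦ hpos hAne hCne hAb hCb
  have hCB := HD_lt_top hΦ hpos hCne hBne hCb hBb
  exact le_ofReal_of_upperSemicontinuousWithinAt (husc _ ⟨toReal_nonneg, toReal_nonneg⟩)
    toReal_nonneg toReal_nonneg fun ε hε ε' hε' => HD_le_of_HD_lt (C := C) hΦ hpos
      ((ENNReal.lt_ofReal_iff_toReal_lt hAC.ne).2 hε)
      ((ENNReal.lt_ofReal_iff_toReal_lt hCB.ne).2 hε')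

/-- triangle inequality for the Hausdorff–Pompeiu distance. -/
theorem statement13 {X : Type*} (d : X → X → ℝ)
    (hpos : ∀ x y, 0 ≤ d x y) (hsymm : ∀ x y, d x y = d y x)
    (hzero : ∀ x y, d x y = 0 ↔ x = y)
    (Φ : ℝ → ℝ → ℝ) (hΦ : IsTriangleFunR d Φ)
    (husc : UpperSemicontinuousOn (fun p : ℝ × ℝ => Φ p.1 p.2) (Set.Ici 0 ×ˢ Set.Ici 0))
    (A B C : Set X)
    (hA : A.Nonempty ∧ IsClosedS d A ∧ BoundedS d A)
    (hB : B.Nonempty ∧ IsClosedS d B ∧ BoundedS d B)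
    (hC : C.Nonempty ∧ IsClosedS d C ∧ BoundedS d C) :
    HD d A B ≤ ENNReal.ofReal (Φ (HD d A C).toReal (HD d C B).toReal) :=
  statement13_general d hpos Φ hΦ husc A B C hA hB hC
end

section
/- If (X,d) is a complete semimetric space with a real-valued upper semicontinuous triangle function Φ, and a sequence (A_n) of nonempty compact subsets converges with respect to the Hausdorff–Pompeiu distance D to a nonempty closed bounded set A, then A is compact; consequently the space (K(X), D) of nonempty compact subsets is complete. -/
open Set Filter Topology ENNReal

/-! The triangle function is upper semicontinuous at `(0, 0)` with `Φ 0 0 = 0`, so for every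
`ε > 0` there is `δ > 0` with `d x z < δ → d z y < δ → d x y < ε`. This is precisely the
composition axiom of a uniformity: the sets `{d < ε}` generate a uniform structure on `X` whose
topology is the ball topology and whose Cauchy sequences are the `d`-Cauchy sequences. The
Hausdorff–Pompeiu distance `D` describes the Hausdorff uniformity on subsets of `X`. A `D`-limit of
compact sets is thus a Hausdorff limit of totally bounded sets, hence totally bounded, and compact
when it is closed since `X` is complete; and `(K(X), D)` is the space of nonempty compacts with the
Hausdorff uniformity, which is complete because `X` is. -/

open scoped Uniformity

namespace Semimetric

variable {X : Type*} {d : X → X → ℝ}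

def IsRegularS (d : X → X → ℝ) : Prop :=
  ∀ ε > (0 : ℝ), ∃ δ > (0 : ℝ), ∀ x y z, d x z < δ → d z y < δ → d x y < ε

theorem IsTriangleFunR.isRegularS {Φ : ℝ → ℝ → ℝ} (hpos : ∀ x y, 0 ≤ d x y)
    (hΦ : IsTriangleFunR d Φ)
    (husc : UpperSemicontinuousOn (fun p : ℝ × ℝ => Φ p.1 p.2) (Ici 0 ×ˢ Ici 0)) :
    IsRegularS d := by
  obtain ⟨-, -, -, h00, htri⟩ := hΦ
  intro ε hε
  have hsmall : ∀ᶠ p in 𝓝[≥] (0 : ℝ) ×ˢ 𝓝[≥] 0, Φ p.1 p.2 < ε := by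
    rw [← nhdsWithin_prod_eq]
    exact husc (0, 0) ⟨self_mem_Ici, self_mem_Ici⟩ ε (by simpa only [h00] using hε)
  obtain ⟨δ, hδ, hΦδ⟩ := (nhdsGE_basis_Ico (0 : ℝ)).prod_self.eventually_iff.1 hsmall
  exact ⟨δ, hδ, fun x y z hxz hzy =>
    (htri x y z).trans_lt (@hΦδ (d x z, d z y) ⟨⟨hpos _ _, hxz⟩, hpos _ _, hzy⟩)⟩

abbrev uniformSpaceOfRegular (d : X → X → ℝ) (hrefl : ∀ x, d x x = 0)
    (hsymm : ∀ x y, d x y = d y x) (hreg : IsRegularS d) : UniformSpace X :=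
  .ofCore
    { uniformity := ⨅ r > 0, 𝓟 {p | d p.1 p.2 < r}
      refl := le_iInf₂ fun r hr => principal_mono.2 <| by simp [subset_def, hrefl, hr]
      symm := tendsto_iInf_iInf fun r => tendsto_iInf_iInf fun _ => tendsto_principal_principal.2
        fun x hx => by rwa [mem_ofPred, hsymm]
      comp := le_iInf₂ fun r hr => let ⟨δ, h0, hδr⟩ := hreg r hr; le_principal_iff.2 <|
        mem_of_superset
          (mem_lift' <| mem_iInf_of_mem δ <| mem_iInf_of_mem h0 <| mem_principal_self _)
          fun (x, y) ⟨z, h₁, h₂⟩ => hδr x y z h₁ h₂ }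

theorem hasBasis_uniformity_uniformSpaceOfRegular (hrefl : ∀ x, d x x = 0)
    (hsymm : ∀ x y, d x y = d y x) (hreg : IsRegularS d) :
    𝓤[uniformSpaceOfRegular d hrefl hsymm hreg].HasBasis (fun ε : ℝ => 0 < ε)
      fun ε => {p | d p.1 p.2 < ε} :=
  hasBasis_biInf_principal'
    (fun ε₁ h₁ ε₂ h₂ => ⟨min ε₁ ε₂, lt_min h₁ h₂,
      ofPred_subset_ofPred.2 fun _ hp => hp.trans_le (min_le_left _ _),
      ofPred_subset_ofPred.2 fun _ hp => hp.trans_le (min_le_right _ _)⟩) ⟨1, one_pos⟩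

section Hausdorff

variable {A B : Set X} {r : ℝ}

theorem HD_le_ofReal_of_mem_hausdorffEntourage (hsymm : ∀ x y, d x y = d y x) (hr : 0 < r)
    (h : (A, B) ∈ hausdorffEntourage {p : X × X | d p.1 p.2 < r}) :
    HD d A B ≤ ENNReal.ofReal r := by
  refine sInf_le ⟨ENNReal.ofReal_pos.2 hr, fun a ha => ?_, fun b hb => ?_⟩
  · obtain ⟨b, hb, hab⟩ := h.1 ha
    exact ⟨b, hb, (ENNReal.ofReal_lt_ofReal_iff hr).2 hab⟩
  · obtain ⟨a, ha, hab⟩ := h.2 hb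
    exact ⟨a, ha, (ENNReal.ofReal_lt_ofReal_iff hr).2 ((hsymm b a).trans_lt hab)⟩

theorem mem_hausdorffEntourage_of_HD_lt (hpos : ∀ x y, 0 ≤ d x y) (hsymm : ∀ x y, d x y = d y x)
    (h : HD d A B < ENNReal.ofReal r) :
    (A, B) ∈ hausdorffEntourage {p : X × X | d p.1 p.2 < r} := by
  obtain ⟨ε, ⟨-, hAB, hBA⟩, hεr⟩ := sInf_lt_iff.1 h
  have hlt : ∀ x y, ENNReal.ofReal (d x y) < ε → d x y < r := fun x y hxy =>
    (ENNReal.ofReal_lt_ofReal_iff_of_nonneg (hpos x y)).1 (hxy.trans hεr)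
  refine ⟨fun a ha => ?_, fun b hb => ?_⟩
  · obtain ⟨b, hb, hab⟩ := hAB a ha
    exact ⟨b, hb, hlt a b hab⟩
  · obtain ⟨a, ha, hba⟩ := hBA b hb
    exact ⟨a, ha, (hsymm a b).trans_lt (hlt b a hba)⟩

theorem tendsto_HD_zero_iff (hpos : ∀ x y, 0 ≤ d x y) (hsymm : ∀ x y, d x y = d y x)
    {ι : Type*} {l : Filter ι} {A B : ι → Set X} :
    Tendsto (fun i => HD d (A i) (B i)) l (𝓝 0) ↔
      ∀ ε > (0 : ℝ), ∀ᶠ i in l, (A i, B i) ∈ hausdorffEntourage {p : X × X | d p.1 p.2 < ε} := by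
  rw [ENNReal.tendsto_nhds_zero]
  refine ⟨fun h ε hε => ?_, fun h ε hε => ?_⟩
  · filter_upwards [h _ (ENNReal.ofReal_pos.2 (half_pos hε))] with i hi
    refine mem_hausdorffEntourage_of_HD_lt hpos hsymm (hi.trans_lt ?_)
    exact (ENNReal.ofReal_lt_ofReal_iff hε).2 (half_lt_self hε)
  · obtain ⟨r, -, hr, hrε⟩ := ENNReal.lt_iff_exists_real_btwn.1 hε
    have hr : 0 < r := ENNReal.ofReal_pos.1 hr
    filter_upwards [h r hr] with i hi
    exact (HD_le_ofReal_of_mem_hausdorffEntourage hsymm hr hi).trans hrε.le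

end Hausdorff

section UniformSpace

variable [UniformSpace X]

theorem isOpen_iff_isOpenS (hd : (𝓤 X).HasBasis (fun ε : ℝ => 0 < ε) fun ε => {p | d p.1 p.2 < ε})
    {U : Set X} : IsOpen U ↔ IsOpenS d U := by
  simp only [isOpen_iff_mem_nhds, (nhds_basis_uniformity hd).mem_iff]
  rfl

theorem isClosed_iff_isClosedS
    (hd : (𝓤 X).HasBasis (fun ε : ℝ => 0 < ε) fun ε => {p | d p.1 p.2 < ε}) {F : Set X} :
    IsClosed F ↔ IsClosedS d F := by
  rw [← isOpen_compl_iff, isOpen_iff_isOpenS hd]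
  rfl

theorem isCompact_iff_isCompactS
    (hd : (𝓤 X).HasBasis (fun ε : ℝ => 0 < ε) fun ε => {p | d p.1 p.2 < ε}) {K : Set X} :
    IsCompact K ↔ IsCompactS d K := by
  refine ⟨fun hK C hC hKC => ?_, fun hK => ?_⟩
  · rw [sUnion_eq_biUnion] at hKC
    simpa only [sUnion_eq_biUnion, id] using hK.elim_finite_subcover_image (c := id)
      (fun U hU => (isOpen_iff_isOpenS hd).2 (hC U hU)) hKC
  · exact isCompact_generateFrom (TopologicalSpace.generateFrom_setOfPred_isOpen _).symm
      fun P hP => hK P fun U hU => (isOpen_iff_isOpenS hd).1 (hP hU)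

theorem tendsto_nhds_iff_convTo (hpos : ∀ x y, 0 ≤ d x y)
    (hd : (𝓤 X).HasBasis (fun ε : ℝ => 0 < ε) fun ε => {p | d p.1 p.2 < ε}) {x : ℕ → X} {p : X} :
    Tendsto x atTop (𝓝 p) ↔ ConvTo d x p := by
  rw [(nhds_basis_uniformity hd).tendsto_right_iff, ConvTo, tendsto_order]
  simp only [mem_ofPred_eq]
  exact ⟨fun h => ⟨fun a ha => .of_forall fun n => ha.trans_le (hpos _ _), h⟩, And.right⟩

theorem completeSpace_of_isCompleteS (hpos : ∀ x y, 0 ≤ d x y)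
    (hd : (𝓤 X).HasBasis (fun ε : ℝ => 0 < ε) fun ε => {p | d p.1 p.2 < ε})
    (hc : IsCompleteS d) : CompleteSpace X := by
  have hnat : (𝓤 X).HasBasis (fun _ : ℕ => True) fun n => {p | d p.1 p.2 < 1 / (n + 1)} :=
    hd.to_hasBasis (fun ε hε => ⟨(exists_nat_one_div_lt hε).choose, trivial,
      fun _ hp => hp.trans (exists_nat_one_div_lt hε).choose_spec⟩)
      fun n _ => ⟨1 / (n + 1), Nat.one_div_pos_of_nat, subset_rfl⟩
  have := hnat.isCountablyGenerated
  refine UniformSpace.complete_of_cauchySeq_tendsto fun x hx => ?_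
  obtain ⟨p, hp⟩ := hc x fun ε hε => hd.cauchySeq_iff.1 hx ε hε
  exact ⟨p, (tendsto_nhds_iff_convTo hpos hd).2 hp⟩

variable [CompleteSpace X]

theorem isCompact_of_tendsto_HD (hpos : ∀ x y, 0 ≤ d x y) (hsymm : ∀ x y, d x y = d y x)
    (hd : (𝓤 X).HasBasis (fun ε : ℝ => 0 < ε) fun ε => {p | d p.1 p.2 < ε})
    {ι : Type*} {l : Filter ι} [l.NeBot] {A : ι → Set X} (hA : ∀ i, IsCompact (A i))
    {L : Set X} (hL : IsClosed L) (h : Tendsto (fun i => HD d (A i) L) l (𝓝 0)) :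
    IsCompact L := by
  let := UniformSpace.hausdorff X
  have hAL : Tendsto A l (𝓝 L) := by
    rw [Uniform.tendsto_nhds_left, hd.uniformity_hausdorff.tendsto_right_iff]
    exact (tendsto_HD_zero_iff hpos hsymm).1 h
  have hLtb : TotallyBounded L :=
    UniformSpace.hausdorff.isClosed_setOfPred_totallyBounded.mem_of_tendsto hAL
      (.of_forall fun i => (hA i).totallyBounded)
  exact isCompact_iff_totallyBounded_isComplete.2 ⟨hLtb, hL.isComplete⟩

theorem exists_isCompact_tendsto_HD (hpos : ∀ x y, 0 ≤ d x y) (hsymm : ∀ x y, d x y = d y x)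
    (hd : (𝓤 X).HasBasis (fun ε : ℝ => 0 < ε) fun ε => {p | d p.1 p.2 < ε})
    {A : ℕ → Set X} (hA : ∀ n, (A n).Nonempty ∧ IsCompact (A n))
    (hcauchy : ∀ ε : ℝ≥0∞, 0 < ε → ∃ N, ∀ m ≥ N, ∀ n ≥ N, HD d (A m) (A n) < ε) :
    ∃ L : Set X, L.Nonempty ∧ IsCompact L ∧ Tendsto (fun n => HD d (A n) L) atTop (𝓝 0) := by
  let K : ℕ → TopologicalSpace.NonemptyCompacts X := fun n => ⟨⟨A n, (hA n).2⟩, (hA n).1⟩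
  have hK : CauchySeq K := hd.uniformity_nonemptyCompacts.cauchySeq_iff.2 fun ε hε =>
    (hcauchy _ (ENNReal.ofReal_pos.2 hε)).imp fun N hN m hm n hn =>
      mem_hausdorffEntourage_of_HD_lt hpos hsymm (hN m hm n hn)
  obtain ⟨L, hKL⟩ := cauchySeq_tendsto_of_complete hK
  rw [Uniform.tendsto_nhds_left, hd.uniformity_nonemptyCompacts.tendsto_right_iff] at hKL
  exact ⟨L, L.nonempty, L.isCompact, (tendsto_HD_zero_iff hpos hsymm).2 hKL⟩

end UniformSpace

end Semimetric

open Semimetric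

/-- D-limits of compact sets are compact, and (K(X), D) is complete. -/
theorem statement15 {X : Type*} (d : X → X → ℝ)
    (hpos : ∀ x y, 0 ≤ d x y) (hsymm : ∀ x y, d x y = d y x)
    (hzero : ∀ x y, d x y = 0 ↔ x = y)
    (hcomplete : IsCompleteS d)
    (Φ : ℝ → ℝ → ℝ) (hΦ : IsTriangleFunR d Φ)
    (husc : UpperSemicontinuousOn (fun p : ℝ × ℝ => Φ p.1 p.2) (Set.Ici 0 ×ˢ Set.Ici 0)) :
    (∀ (A : ℕ → Set X) (L : Set X),
        (∀ n, (A n).Nonempty ∧ IsCompactS d (A n)) →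
        (L.Nonempty ∧ IsClosedS d L ∧ BoundedS d L) →
        Tendsto (fun n => HD d (A n) L) atTop (nhds 0) →
        IsCompactS d L) ∧
    (∀ A : ℕ → Set X,
        (∀ n, (A n).Nonempty ∧ IsCompactS d (A n)) →
        (∀ ε : ℝ≥0∞, 0 < ε → ∃ N, ∀ m ≥ N, ∀ n ≥ N, HD d (A m) (A n) < ε) →
        ∃ L : Set X, L.Nonempty ∧ IsCompactS d L ∧
          Tendsto (fun n => HD d (A n) L) atTop (nhds 0)) := by
  have hrefl : ∀ x, d x x = 0 := fun x => (hzero x x).2 rfl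
  have hreg := hΦ.isRegularS hpos husc
  let := uniformSpaceOfRegular d hrefl hsymm hreg
  have hd := hasBasis_uniformity_uniformSpaceOfRegular hrefl hsymm hreg
  have := completeSpace_of_isCompleteS hpos hd hcomplete
  simp only [← isCompact_iff_isCompactS hd, ← isClosed_iff_isClosedS hd]
  exact ⟨fun A L hA hL => isCompact_of_tendsto_HD hpos hsymm hd (fun n => (hA n).2) hL.2.1,
    fun A hA => exists_isCompact_tendsto_HD hpos hsymm hd hA⟩
end

section
/- Let T be a φ-contraction on a complete regular semimetric space (X,d) with triangle function Φ, and let x₀ be its unique fixed point. Then for all x ∈ X, d(x, x₀) ≤ ψ(d(x, T(x))), where ψ(t) := sup{ s ≥ 0 : s ≤ Φ(t, φ(s)) }. -/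
/-!
Run the triangle inequality through `T x`: with `s = d(x, x₀)`,
`s ≤ Φ(d(x, Tx), d(Tx, Tx₀)) ≤ Φ(d(x, Tx), φ(s))`, so `s` itself is admissible in the
supremum defining `ψ(d(x, Tx))`.
-/

open Set Filter Topology ENNReal

namespace Semimetric

variable {X : Type*}

theorem IsTriangleFun.mono_right {d : X → X → ℝ} {Φ : ℝ → ℝ → ℝ≥0∞}
    (hΦ : IsTriangleFun d Φ) {u v₁ v₂ : ℝ} (hu : 0 ≤ u) (hv₁ : 0 ≤ v₁) (hv : v₁ ≤ v₂) :
    Φ u v₁ ≤ Φ u v₂ := by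
  obtain ⟨hsymm, hmono, -, -⟩ := hΦ
  rw [hsymm u, hsymm u]
  exact hmono v₁ v₂ u hv₁ hv hu

theorem ofReal_le_Psi {Φ : ℝ → ℝ → ℝ≥0∞} {φ : ℝ → ℝ} {s t : ℝ} (hs : 0 ≤ s)
    (h : ENNReal.ofReal s ≤ Φ t (φ s)) : ENNReal.ofReal s ≤ Psi Φ φ t :=
  le_sSup ⟨s, hs, h, rfl⟩

theorem IsContraction.dist_image_le_of_isFixedPt {d : X → X → ℝ} {φ : ℝ → ℝ} {T : X → X}
    (hT : IsContraction d φ T) {x₀ : X} (hfix : T x₀ = x₀) (x : X) :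
    d (T x) x₀ ≤ φ (d x x₀) := by
  simpa only [hfix] using hT x x₀

end Semimetric

open Semimetric

theorem statement16_general {X : Type*} (d : X → X → ℝ)
    (hpos : ∀ x y, 0 ≤ d x y)
    (Φ : ℝ → ℝ → ℝ≥0∞) (hΦ : IsTriangleFun d Φ)
    (φ : ℝ → ℝ)
    (T : X → X) (hT : IsContraction d φ T)
    (x₀ : X) (hfix : T x₀ = x₀) :
    ∀ x : X, ENNReal.ofReal (d x x₀) ≤ Psi Φ φ (d x (T x)) := by
  intro x
  refine ofReal_le_Psi (hpos x x₀) ?_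
  calc ENNReal.ofReal (d x x₀) ≤ Φ (d x (T x)) (d (T x) x₀) := hΦ.2.2.2 x x₀ (T x)
    _ ≤ Φ (d x (T x)) (φ (d x x₀)) :=
      hΦ.mono_right (hpos _ _) (hpos _ _) (hT.dist_image_le_of_isFixedPt hfix x)

/-- error estimate via ψ for the distance to the fixed point. -/
theorem statement16 {X : Type*} (d : X → X → ℝ)
    (hpos : ∀ x y, 0 ≤ d x y) (hsymm : ∀ x y, d x y = d y x)
    (hzero : ∀ x y, d x y = 0 ↔ x = y)
    (hcomplete : IsCompleteS d)
    (Φ : ℝ → ℝ → ℝ≥0∞) (hΦ : IsTriangleFun d Φ) (hreg : RegularAt00 Φ)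
    (φ : ℝ → ℝ) (hφ : IsComparison φ)
    (T : X → X) (hT : IsContraction d φ T)
    (x₀ : X) (hfix : T x₀ = x₀) :
    ∀ x : X, ENNReal.ofReal (d x x₀) ≤ Psi Φ φ (d x (T x)) :=
  statement16_general d hpos Φ hΦ φ T hT x₀ hfix
end
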